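/- arXiv:2501.11018 — 3 statements merged into one kernel-verified Lean document; each statement's English description precedes it below -/
import Mathlib

section
/- Let f_i ∈ L¹(ℝ^n, ℝ₊), i = 1,2, and suppose f_i is more log-convex than g_{A_i} for positive-definite symmetric n×n matrices A_i > 0, i = 1,2. Then the convolution f_1 ∗ f_2 is more log-convex than g_C, where C is the positive-definite matrix determined by C^{-1} = A_1^{-1} + A_2^{-1}. -/
open MeasureTheory Matrix

/-- The (un-normalized) centered Gaussian `g_A(x) = exp(-(1/2)⟨Ax,x⟩)`. -/
noncomputable def gaussFn {ι : Type*} [Fintype ι] (A : Matrix ι ι ℝ) (x : ι → ℝ) : ℝ :=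
  Real.exp (-(1/2 : ℝ) * (x ⬝ᵥ A.mulVec x))

/-- A nonnegative function is log-convex if
`f(tx + (1-t)y) ≤ f(x)^t f(y)^(1-t)` for all `x, y` and `t ∈ [0,1]`. -/
def IsLogConvex {ι : Type*} (f : (ι → ℝ) → ℝ) : Prop :=
  (∀ x, 0 ≤ f x) ∧ ∀ x y : ι → ℝ, ∀ t : ℝ, 0 ≤ t → t ≤ 1 →
    f (t • x + (1 - t) • y) ≤ f x ^ t * f y ^ (1 - t)

/-- `f` is more log-convex than `g_A` if `f = g_A ⬝ h` with `h` log-convex. -/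
def MoreLogConvexThan {ι : Type*} [Fintype ι] (A : Matrix ι ι ℝ) (f : (ι → ℝ) → ℝ) : Prop :=
  ∃ h : (ι → ℝ) → ℝ, IsLogConvex h ∧ f = fun x => gaussFn A x * h x

/-- The convolution `(f₁ ∗ f₂)(x) = ∫ f₁(x - y) f₂(y) dy`. -/
noncomputable def convFn {ι : Type*} [Fintype ι] (f₁ f₂ : (ι → ℝ) → ℝ) (x : ι → ℝ) : ℝ :=
  ∫ y : ι → ℝ, f₁ (x - y) * f₂ y

/-!
Write `f i = g_{A i} h i`. Completing the square,
`g_{A₁}(x - y) g_{A₂}(y) = g_C(x) g_B(y - M x)` with `B = A₁ + A₂`, `M = B⁻¹ A₁` and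
`C = A₁ - A₁ B⁻¹ A₁ = (A₁⁻¹ + A₂⁻¹)⁻¹`, so the substitution `y = M x + z` gives
`f₁ ∗ f₂ = g_C K` with `K x = ∫ g_B(z) h₁(x - M x - z) h₂(M x + z) dz`.
For fixed `z` the integrand is log-convex in `x`, hence so is `K` by Hölder's inequality.
Integrability of the `f i` makes `K` finite almost everywhere, and a log-convex function that is
finite almost everywhere is finite everywhere, since every point is the midpoint of two points of
a conull set.
-/

open scoped ENNReal

section LogConvex

variable {E : Type*} [AddCommGroup E] [Module ℝ E]

/-- `IsLogConvex` for `ℝ≥0∞`-valued functions: Hölder's inequality can be applied to integrals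
before their finiteness is known. -/
def IsLogConvexENNReal (F : E → ℝ≥0∞) : Prop :=
  ∀ x y : E, ∀ t : ℝ, 0 ≤ t → t ≤ 1 → F (t • x + (1 - t) • y) ≤ F x ^ t * F y ^ (1 - t)

namespace IsLogConvexENNReal

lemma const (c : ℝ≥0∞) : IsLogConvexENNReal fun _ : E => c := by
  intro x y t ht0 ht1
  rw [← ENNReal.rpow_add_of_nonneg _ _ ht0 (sub_nonneg.2 ht1), add_sub_cancel, ENNReal.rpow_one]

lemma mul {F G : E → ℝ≥0∞} (hF : IsLogConvexENNReal F) (hG : IsLogConvexENNReal G) :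
    IsLogConvexENNReal fun x => F x * G x := by
  intro x y t ht0 ht1
  calc F (t • x + (1 - t) • y) * G (t • x + (1 - t) • y)
      ≤ (F x ^ t * F y ^ (1 - t)) * (G x ^ t * G y ^ (1 - t)) :=
        mul_le_mul' (hF x y t ht0 ht1) (hG x y t ht0 ht1)
    _ = (F x * G x) ^ t * (F y * G y) ^ (1 - t) := by
        rw [ENNReal.mul_rpow_of_nonneg _ _ ht0, ENNReal.mul_rpow_of_nonneg _ _ (sub_nonneg.2 ht1)]
        ring

lemma comp_affineMap {E' : Type*} [AddCommGroup E'] [Module ℝ E'] {F : E' → ℝ≥0∞}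
    (hF : IsLogConvexENNReal F) (f : E →ᵃ[ℝ] E') : IsLogConvexENNReal (F ∘ f) := by
  intro x y t ht0 ht1
  simpa only [Function.comp_apply, Convex.combo_affine_apply (add_sub_cancel t 1)]
    using hF (f x) (f y) t ht0 ht1

lemma lintegral {α : Type*} [MeasurableSpace α] {μ : Measure α} {F : E → α → ℝ≥0∞}
    (hF : ∀ z, IsLogConvexENNReal (F · z)) (hFm : ∀ x, AEMeasurable (F x) μ) :
    IsLogConvexENNReal fun x => ∫⁻ z, F x z ∂μ := by
  intro x y t ht0 ht1
  calc ∫⁻ z, F (t • x + (1 - t) • y) z ∂μ ≤ ∫⁻ z, F x z ^ t * F y z ^ (1 - t) ∂μ :=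
        lintegral_mono fun z => hF z x y t ht0 ht1
    _ ≤ _ := ENNReal.lintegral_mul_norm_pow_le (hFm x) (hFm y) ht0 (sub_nonneg.2 ht1)
        (add_sub_cancel t 1)

lemma ne_top_of_ae_ne_top [MeasurableSpace E] [MeasurableAdd E] [MeasurableNeg E]
    {μ : Measure E} [μ.IsAddLeftInvariant] [μ.IsNegInvariant] [NeZero μ] {F : E → ℝ≥0∞}
    (hF : IsLogConvexENNReal F) (hae : ∀ᵐ x ∂μ, F x ≠ ⊤) (x₀ : E) : F x₀ ≠ ⊤ := by
  obtain ⟨v, hplus, hminus⟩ : ∃ v, F (x₀ + v) ≠ ⊤ ∧ F (x₀ - v) ≠ ⊤ :=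
    (((measurePreserving_add_left μ x₀).quasiMeasurePreserving.ae hae).and
      ((Measure.measurePreserving_sub_left μ x₀).quasiMeasurePreserving.ae hae)).exists
  have hmid := hF (x₀ + v) (x₀ - v) (1 / 2) (by norm_num) (by norm_num)
  rw [show (1 / 2 : ℝ) • (x₀ + v) + (1 - 1 / 2 : ℝ) • (x₀ - v) = x₀ by module] at hmid
  exact ne_top_of_le_ne_top (ENNReal.mul_ne_top
    (ENNReal.rpow_ne_top_of_nonneg (by norm_num) hplus)
    (ENNReal.rpow_ne_top_of_nonneg (by norm_num) hminus)) hmid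

lemma isLogConvex_toReal {ι : Type*} {F : (ι → ℝ) → ℝ≥0∞} (hF : IsLogConvexENNReal F)
    (hfin : ∀ x, F x ≠ ⊤) : IsLogConvex fun x => (F x).toReal := by
  refine ⟨fun x => ENNReal.toReal_nonneg, fun x y t ht0 ht1 => ?_⟩
  rw [ENNReal.toReal_rpow, ENNReal.toReal_rpow, ← ENNReal.toReal_mul]
  exact ENNReal.toReal_mono (ENNReal.mul_ne_top (ENNReal.rpow_ne_top_of_nonneg ht0 (hfin x))
    (ENNReal.rpow_ne_top_of_nonneg (sub_nonneg.2 ht1) (hfin y))) (hF x y t ht0 ht1)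

end IsLogConvexENNReal

lemma IsLogConvex.ofReal {ι : Type*} {h : (ι → ℝ) → ℝ} (hh : IsLogConvex h) :
    IsLogConvexENNReal fun x => ENNReal.ofReal (h x) := by
  intro x y t ht0 ht1
  dsimp only
  rw [ENNReal.ofReal_rpow_of_nonneg (hh.1 x) ht0,
    ENNReal.ofReal_rpow_of_nonneg (hh.1 y) (sub_nonneg.2 ht1),
    ← ENNReal.ofReal_mul (Real.rpow_nonneg (hh.1 x) t)]
  exact ENNReal.ofReal_le_ofReal (hh.2 x y t ht0 ht1)

section Shear

variable [MeasurableSpace E] [MeasurableAdd E] [MeasurableNeg E] {μ : Measure E}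
  [μ.IsAddLeftInvariant] [μ.IsNegInvariant]

lemma IsLogConvexENNReal.lintegral_mul_comp_sub_mul_comp_add {G H₁ H₂ : E → ℝ≥0∞}
    (hH₁ : IsLogConvexENNReal H₁) (hH₂ : IsLogConvexENNReal H₂) (hG : AEMeasurable G μ)
    (hH₁m : AEMeasurable H₁ μ) (hH₂m : AEMeasurable H₂ μ) (M : E →ₗ[ℝ] E) :
    IsLogConvexENNReal fun x => ∫⁻ z, G z * H₁ (x - M x - z) * H₂ (M x + z) ∂μ := by
  refine lintegral (fun z => ?_) fun x => ?_
  · exact ((const (G z)).mul (hH₁.comp_affineMap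
      ((LinearMap.id - M).toAffineMap - AffineMap.const ℝ E z))).mul
      (hH₂.comp_affineMap (M.toAffineMap + AffineMap.const ℝ E z))
  · exact (hG.mul (hH₁m.comp_quasiMeasurePreserving
      (Measure.measurePreserving_sub_left μ (x - M x)).quasiMeasurePreserving)).mul
      (hH₂m.comp_quasiMeasurePreserving
        (measurePreserving_add_left μ (M x)).quasiMeasurePreserving)

end Shear

end LogConvex

section Gaussian

variable {ι : Type*} [Fintype ι]

lemma gaussFn_pos (A : Matrix ι ι ℝ) (x : ι → ℝ) : 0 < gaussFn A x :=
  Real.exp_pos _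

lemma continuous_gaussFn (A : Matrix ι ι ℝ) : Continuous (gaussFn A) := by
  unfold gaussFn; fun_prop

lemma MoreLogConvexThan.nonneg {A : Matrix ι ι ℝ} {f : (ι → ℝ) → ℝ}
    (hf : MoreLogConvexThan A f) (x : ι → ℝ) : 0 ≤ f x := by
  obtain ⟨h, hh, rfl⟩ := hf
  exact mul_nonneg (gaussFn_pos A x).le (hh.1 x)

lemma aemeasurable_of_gaussFn_mul {μ : Measure (ι → ℝ)}
    {A : Matrix ι ι ℝ} {h : (ι → ℝ) → ℝ} (hf : AEMeasurable (fun x => gaussFn A x * h x) μ) :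
    AEMeasurable h μ := by
  have hdiv : h = fun x => gaussFn A x * h x / gaussFn A x := by
    funext x
    rw [mul_div_cancel_left₀ _ (gaussFn_pos A x).ne']
  rw [hdiv]
  exact hf.div (continuous_gaussFn A).aemeasurable

lemma Matrix.IsSymm.dotProduct_mulVec_comm {R : Type*} [CommSemiring R] {S : Matrix ι ι R}
    (hS : S.IsSymm) (u v : ι → R) : u ⬝ᵥ S *ᵥ v = v ⬝ᵥ S *ᵥ u := by
  rw [dotProduct_mulVec, ← mulVec_transpose, hS.eq, dotProduct_comm]

variable [DecidableEq ι]

lemma Matrix.inv_add_inv_inv_eq {A₁ A₂ : Matrix ι ι ℝ} (h₁ : IsUnit A₁.det) (h₂ : IsUnit A₂.det)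
    (h : IsUnit (A₁ + A₂).det) : (A₁⁻¹ + A₂⁻¹)⁻¹ = A₁ - A₁ * (A₁ + A₂)⁻¹ * A₁ := by
  have hsum : A₁⁻¹ + A₂⁻¹ = A₁⁻¹ * (A₁ + A₂) * A₂⁻¹ := by
    rw [Matrix.mul_add, nonsing_inv_mul _ h₁, Matrix.add_mul, Matrix.one_mul, Matrix.mul_assoc,
      mul_nonsing_inv _ h₂, Matrix.mul_one, add_comm]
  rw [hsum, Matrix.mul_inv_rev, Matrix.mul_inv_rev, nonsing_inv_nonsing_inv _ h₁,
    nonsing_inv_nonsing_inv _ h₂]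
  calc A₂ * ((A₁ + A₂)⁻¹ * A₁)
      = ((A₁ + A₂) - A₁) * ((A₁ + A₂)⁻¹ * A₁) := by rw [add_sub_cancel_left]
    _ = A₁ - A₁ * (A₁ + A₂)⁻¹ * A₁ := by
        rw [Matrix.sub_mul, ← Matrix.mul_assoc, mul_nonsing_inv _ h, Matrix.one_mul,
          Matrix.mul_assoc]

lemma dotProduct_mulVec_complete_square {A₁ A₂ : Matrix ι ι ℝ} (h₁ : A₁.IsSymm) (h₂ : A₂.IsSymm)
    (h : IsUnit (A₁ + A₂).det) (x y : ι → ℝ) :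
    (x - y) ⬝ᵥ A₁ *ᵥ (x - y) + y ⬝ᵥ A₂ *ᵥ y
      = x ⬝ᵥ (A₁ - A₁ * (A₁ + A₂)⁻¹ * A₁) *ᵥ x
        + (y - ((A₁ + A₂)⁻¹ * A₁) *ᵥ x) ⬝ᵥ (A₁ + A₂) *ᵥ (y - ((A₁ + A₂)⁻¹ * A₁) *ᵥ x) := by
  set B := A₁ + A₂
  set m := (B⁻¹ * A₁) *ᵥ x
  have hB : B.IsSymm := h₁.add h₂
  have hBm : B *ᵥ m = A₁ *ᵥ x := by
    rw [mulVec_mulVec, ← Matrix.mul_assoc, mul_nonsing_inv _ h, Matrix.one_mul]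
  have hmBm : m ⬝ᵥ B *ᵥ m = x ⬝ᵥ (A₁ * B⁻¹ * A₁) *ᵥ x := by
    rw [hBm, h₁.dotProduct_mulVec_comm, mulVec_mulVec, ← Matrix.mul_assoc]
  have hmBy : m ⬝ᵥ B *ᵥ y = y ⬝ᵥ A₁ *ᵥ x := by rw [hB.dotProduct_mulVec_comm, hBm]
  have hyBm : y ⬝ᵥ B *ᵥ m = y ⬝ᵥ A₁ *ᵥ x := by rw [hBm]
  have hxy : x ⬝ᵥ A₁ *ᵥ y = y ⬝ᵥ A₁ *ᵥ x := h₁.dotProduct_mulVec_comm x y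
  simp only [B, mulVec_sub, sub_mulVec, add_mulVec, sub_dotProduct, dotProduct_sub,
    dotProduct_add] at hmBm hmBy hyBm ⊢
  linarith

lemma gaussFn_sub_mul_gaussFn {A₁ A₂ : Matrix ι ι ℝ} (hA₁ : A₁.PosDef) (hA₂ : A₂.PosDef)
    (x y : ι → ℝ) :
    gaussFn A₁ (x - y) * gaussFn A₂ y
      = gaussFn (A₁⁻¹ + A₂⁻¹)⁻¹ x * gaussFn (A₁ + A₂) (y - ((A₁ + A₂)⁻¹ * A₁) *ᵥ x) := by
  have hdet {A : Matrix ι ι ℝ} (hA : A.PosDef) : IsUnit A.det :=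
    (isUnit_iff_isUnit_det A).mp hA.isUnit
  have hsymm {A : Matrix ι ι ℝ} (hA : A.PosDef) : A.IsSymm :=
    isHermitian_iff_isSymm.mp hA.isHermitian
  have hsq := dotProduct_mulVec_complete_square (hsymm hA₁) (hsymm hA₂) (hdet (hA₁.add hA₂)) x y
  rw [Matrix.inv_add_inv_inv_eq (hdet hA₁) (hdet hA₂) (hdet (hA₁.add hA₂))]
  simp only [gaussFn, ← Real.exp_add]
  congr 1
  linear_combination (-(1 / 2) : ℝ) * hsq

lemma lintegral_gaussFn_mul_conv_eq {μ : Measure (ι → ℝ)} [μ.IsAddLeftInvariant]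
    {A₁ A₂ : Matrix ι ι ℝ} (hA₁ : A₁.PosDef) (hA₂ : A₂.PosDef) {h₁ h₂ : (ι → ℝ) → ℝ} (hh₁ : ∀ x, 0 ≤ h₁ x)
    (x : ι → ℝ) :
    ∫⁻ y, ENNReal.ofReal (gaussFn A₁ (x - y) * h₁ (x - y) * (gaussFn A₂ y * h₂ y)) ∂μ
      = ENNReal.ofReal (gaussFn (A₁⁻¹ + A₂⁻¹)⁻¹ x) *
        ∫⁻ z, ENNReal.ofReal (gaussFn (A₁ + A₂) z)
          * ENNReal.ofReal (h₁ (x - ((A₁ + A₂)⁻¹ * A₁) *ᵥ x - z))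
          * ENNReal.ofReal (h₂ (((A₁ + A₂)⁻¹ * A₁) *ᵥ x + z)) ∂μ := by
  set m := ((A₁ + A₂)⁻¹ * A₁) *ᵥ x
  rw [← lintegral_add_left_eq_self _ m, ← lintegral_const_mul' _ _ ENNReal.ofReal_ne_top]
  refine lintegral_congr fun z => ?_
  have hg := gaussFn_sub_mul_gaussFn hA₁ hA₂ x (m + z)
  rw [add_sub_cancel_left, sub_add_eq_sub_sub] at hg
  rw [sub_add_eq_sub_sub, ← ENNReal.ofReal_mul (gaussFn_pos _ _).le,
    ← ENNReal.ofReal_mul (mul_nonneg (gaussFn_pos _ _).le (hh₁ _)),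
    ← ENNReal.ofReal_mul (gaussFn_pos _ _).le]
  congr 1
  linear_combination (h₁ (x - m - z) * h₂ (m + z)) * hg

end Gaussian

lemma MeasureTheory.Integrable.ae_lintegral_ofReal_conv_ne_top {G : Type*} [AddCommGroup G]
    [MeasurableSpace G] [MeasurableAdd₂ G] [MeasurableNeg G] {μ : Measure G} [SFinite μ] [μ.IsAddRightInvariant]
    {f₁ f₂ : G → ℝ} (hf₁ : Integrable f₁ μ) (hf₂ : Integrable f₂ μ) :
    ∀ᵐ x ∂μ, ∫⁻ y, ENNReal.ofReal (f₁ (x - y) * f₂ y) ∂μ ≠ ⊤ := by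
  filter_upwards [hf₂.ae_convolution_exists (ContinuousLinearMap.mul ℝ ℝ) hf₁] with x hx
  simp_rw [mul_comm (f₁ _)]
  exact hx.lintegral_lt_top.ne

lemma convFn_eq_toReal_lintegral {ι : Type*} [Fintype ι] {f₁ f₂ : (ι → ℝ) → ℝ}
    (hf₁ : AEStronglyMeasurable f₁) (hf₂ : AEStronglyMeasurable f₂) (h₁ : ∀ x, 0 ≤ f₁ x)
    (h₂ : ∀ x, 0 ≤ f₂ x) (x : ι → ℝ) :
    convFn f₁ f₂ x = (∫⁻ y, ENNReal.ofReal (f₁ (x - y) * f₂ y)).toReal :=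
  integral_eq_lintegral_of_nonneg_ae
    (Filter.Eventually.of_forall fun _ => mul_nonneg (h₁ _) (h₂ _))
    ((hf₁.comp_quasiMeasurePreserving
      (Measure.measurePreserving_sub_left volume x).quasiMeasurePreserving).mul hf₂)

theorem convolution_more_log_convex_general (n : ℕ)
    (f₁ f₂ : (Fin n → ℝ) → ℝ) (hf₁int : Integrable f₁) (hf₂int : Integrable f₂)
    (A₁ A₂ : Matrix (Fin n) (Fin n) ℝ) (hA₁ : A₁.PosDef) (hA₂ : A₂.PosDef)
    (hf₁ : MoreLogConvexThan A₁ f₁) (hf₂ : MoreLogConvexThan A₂ f₂) :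
    MoreLogConvexThan (A₁⁻¹ + A₂⁻¹)⁻¹ (convFn f₁ f₂) := by
  have hconv := convFn_eq_toReal_lintegral hf₁int.1 hf₂int.1 hf₁.nonneg hf₂.nonneg
  have hconv_fin := hf₁int.ae_lintegral_ofReal_conv_ne_top hf₂int
  obtain ⟨h₁, hh₁, rfl⟩ := hf₁
  obtain ⟨h₂, hh₂, rfl⟩ := hf₂
  beta_reduce at hconv hconv_fin
  set M := (A₁ + A₂)⁻¹ * A₁
  set K : (Fin n → ℝ) → ℝ≥0∞ := fun x => ∫⁻ z, ENNReal.ofReal (gaussFn (A₁ + A₂) z)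
    * ENNReal.ofReal (h₁ (x - M *ᵥ x - z)) * ENNReal.ofReal (h₂ (M *ᵥ x + z))
  have hfactor : ∀ x, _ = ENNReal.ofReal (gaussFn (A₁⁻¹ + A₂⁻¹)⁻¹ x) * K x :=
    lintegral_gaussFn_mul_conv_eq hA₁ hA₂ hh₁.1
  have hK : IsLogConvexENNReal K :=
    hh₁.ofReal.lintegral_mul_comp_sub_mul_comp_add hh₂.ofReal
      (continuous_gaussFn _).measurable.ennreal_ofReal.aemeasurable
      (aemeasurable_of_gaussFn_mul hf₁int.aemeasurable).ennreal_ofReal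
      (aemeasurable_of_gaussFn_mul hf₂int.aemeasurable).ennreal_ofReal M.mulVecLin
  have hKfin : ∀ x, K x ≠ ⊤ := by
    refine hK.ne_top_of_ae_ne_top (μ := volume) ?_
    filter_upwards [hconv_fin] with x hx hKx
    rw [hfactor, hKx, ENNReal.mul_top (ENNReal.ofReal_pos.2 (gaussFn_pos _ x)).ne'] at hx
    exact hx rfl
  refine ⟨fun x => (K x).toReal, hK.isLogConvex_toReal hKfin, funext fun x => ?_⟩
  rw [hconv, hfactor, ENNReal.toReal_mul, ENNReal.toReal_ofReal (gaussFn_pos _ x).le]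

/-- If `f_i ∈ L¹(ℝ^n, ℝ₊)` is more log-convex than `g_{A_i}`, `A_i > 0`, `i = 1,2`, then
`f₁ ∗ f₂` is more log-convex than `g_C` where `C⁻¹ = A₁⁻¹ + A₂⁻¹`. -/
theorem convolution_more_log_convex (n : ℕ)
    (f₁ f₂ : (Fin n → ℝ) → ℝ) (hf₁int : Integrable f₁) (hf₂int : Integrable f₂)
    (hf₁nn : ∀ x, 0 ≤ f₁ x) (hf₂nn : ∀ x, 0 ≤ f₂ x)
    (A₁ A₂ : Matrix (Fin n) (Fin n) ℝ) (hA₁ : A₁.PosDef) (hA₂ : A₂.PosDef)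
    (hf₁ : MoreLogConvexThan A₁ f₁) (hf₂ : MoreLogConvexThan A₂ f₂) :
    MoreLogConvexThan (A₁⁻¹ + A₂⁻¹)⁻¹ (convFn f₁ f₂) :=
  convolution_more_log_convex_general n f₁ f₂ hf₁int hf₂int A₁ A₂ hA₁ hA₂ hf₁ hf₂
end

section
/- Let Σ be an N×N positive-definite real symmetric matrix written in block form Σ = [[Σ_1, Σ_o],[Σ_o^*, Σ_2]] corresponding to ℝ^N = ℝ^{n_1} ⊕ ℝ^{n_2}, and for s ∈ [0,1] set Σ^(s) := [[Σ_1, sΣ_o],[sΣ_o^*, Σ_2]]. Then for all positive semi-definite n_i×n_i matrices A_i ≥ 0, i = 1,2, the function [0,1] ∋ s ↦ det(Id_N + (A_1 ⊕ A_2) Σ^(s)) is monotone non-increasing. In particular, inf_{A_1,A_2 ≥ 0} det(Id_N + (A_1 ⊕ A_2)(Σ_1 ⊕ Σ_2)) / det(Id_N + (A_1 ⊕ A_2) Σ) = 1. -/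
/-!
Write `A₁ ⊕ A₂ = B * B` with `B = √A₁ ⊕ √A₂`. Since `B` is block diagonal,
`det (1 + (A₁ ⊕ A₂) Σ⁽ˢ⁾) = det (1 + B Σ⁽ˢ⁾ B) = det P⁽ˢ⁾` for the positive definite matrix
`P = 1 + B Σ B`. By the Schur complement formula `det P⁽ˢ⁾ = det P₁₁ * det (P₂₂ - s² X)` with
`X = P₂₁ P₁₁⁻¹ P₁₂ ≥ 0`, and `P₂₂ - X > 0` is the Schur complement of `P`. Adding a positive
semidefinite matrix to a positive definite one does not decrease the determinant, so `det P⁽ˢ⁾` is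
antitone on `[0, 1]`. Comparing `s = 0` with `s = 1` shows every ratio in the infimum is `≥ 1`,
and `A₁ = A₂ = 0` gives `1`.
-/

open Matrix

namespace Matrix

open scoped MatrixOrder

section Determinant

variable {n : Type*} [Fintype n] [DecidableEq n]

theorem PosSemidef.one_le_det_one_add {N : Matrix n n ℝ} (hN : N.PosSemidef) :
    1 ≤ det (1 + N) := by
  have h : cfc (fun x : ℝ ↦ 1 + x) N = 1 + N := by
    rw [cfc_const_add (1 : ℝ) (fun x ↦ x) N, cfc_id' ℝ N, map_one]
  rw [← h, hN.1.cfc_eq]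
  simp only [IsHermitian.cfc, RCLike.ofReal_real_eq_id, CompTriple.comp_eq, det_map, det_diagonal,
    Function.comp_apply]
  exact Finset.one_le_prod fun i _ ↦ le_add_of_nonneg_right (hN.eigenvalues_nonneg i)

theorem det_one_add_mul_self_mul {R : Type*} [CommRing R] (B M : Matrix n n R) :
    det (1 + B * B * M) = det (1 + B * M * B) := by
  rw [Matrix.mul_assoc, det_one_add_mul_comm]

theorem PosSemidef.one_le_det_one_add_mul {A M : Matrix n n ℝ} (hA : A.PosSemidef)
    (hM : M.PosSemidef) : 1 ≤ det (1 + A * M) := by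
  have hB := (CFC.sqrt_nonneg A).posSemidef
  rw [← CFC.sqrt_mul_sqrt_self A hA.nonneg, det_one_add_mul_self_mul]
  simpa only [hB.1.eq] using (hM.conjTranspose_mul_mul_same (CFC.sqrt A)).one_le_det_one_add

theorem PosDef.det_le_det_add {Q Y : Matrix n n ℝ} (hQ : Q.PosDef) (hY : Y.PosSemidef) :
    det Q ≤ det (Q + Y) := by
  have hQY : Q + Y = Q * (1 + Q⁻¹ * Y) := by
    rw [Matrix.mul_add, Matrix.mul_one, ← Matrix.mul_assoc,
      mul_nonsing_inv _ hQ.det_pos.ne'.isUnit, Matrix.one_mul]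
  rw [hQY, det_mul]
  exact le_mul_of_one_le_right hQ.det_pos.le (hQ.inv.posSemidef.one_le_det_one_add_mul hY)

end Determinant

section ScaleOffDiag

variable {m n α : Type*}

/-- `scaleOffDiag s Σ` is the matrix `Σ⁽ˢ⁾` of the paper. -/
def scaleOffDiag [Mul α] (s : α) (M : Matrix (m ⊕ n) (m ⊕ n) α) : Matrix (m ⊕ n) (m ⊕ n) α :=
  fromBlocks M.toBlocks₁₁ (s • M.toBlocks₁₂) (s • M.toBlocks₂₁) M.toBlocks₂₂

section Semiring

variable [Semiring α]

@[simp]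
theorem scaleOffDiag_one_left (M : Matrix (m ⊕ n) (m ⊕ n) α) : scaleOffDiag 1 M = M := by
  simp [scaleOffDiag, fromBlocks_toBlocks]

@[simp]
theorem scaleOffDiag_zero_left (M : Matrix (m ⊕ n) (m ⊕ n) α) :
    scaleOffDiag 0 M = fromBlocks M.toBlocks₁₁ 0 0 M.toBlocks₂₂ := by
  simp [scaleOffDiag]

theorem scaleOffDiag_add (s : α) (M N : Matrix (m ⊕ n) (m ⊕ n) α) :
    scaleOffDiag s (M + N) = scaleOffDiag s M + scaleOffDiag s N := by
  ext (i | i) (j | j) <;>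
    simp [scaleOffDiag, toBlocks₁₁, toBlocks₁₂, toBlocks₂₁, toBlocks₂₂, mul_add]

@[simp]
theorem scaleOffDiag_one [DecidableEq m] [DecidableEq n] (s : α) :
    scaleOffDiag s (1 : Matrix (m ⊕ n) (m ⊕ n) α) = 1 := by
  ext (i | i) (j | j) <;>
    simp [scaleOffDiag, toBlocks₁₁, toBlocks₁₂, toBlocks₂₁, toBlocks₂₂, one_apply]

end Semiring

theorem fromBlocks_diagonal_mul_scaleOffDiag_mul [CommSemiring α] [Fintype m] [Fintype n]
    (s : α) (B₁ C₁ : Matrix m m α) (B₂ C₂ : Matrix n n α) (M : Matrix (m ⊕ n) (m ⊕ n) α) :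
    fromBlocks B₁ 0 0 B₂ * scaleOffDiag s M * fromBlocks C₁ 0 0 C₂ =
      scaleOffDiag s (fromBlocks B₁ 0 0 B₂ * M * fromBlocks C₁ 0 0 C₂) := by
  conv_rhs => rw [← fromBlocks_toBlocks M]
  simp [scaleOffDiag, fromBlocks_multiply]

theorem det_scaleOffDiag [CommRing α] [Fintype m] [Fintype n] [DecidableEq m] [DecidableEq n]
    (s : α) (M : Matrix (m ⊕ n) (m ⊕ n) α) [Invertible M.toBlocks₁₁] :
    det (scaleOffDiag s M) = det M.toBlocks₁₁ *
      det (M.toBlocks₂₂ - s ^ 2 • (M.toBlocks₂₁ * ⅟M.toBlocks₁₁ * M.toBlocks₁₂)) := by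
  rw [scaleOffDiag, det_fromBlocks₁₁]
  congr 3
  simp only [Matrix.smul_mul, Matrix.mul_smul, smul_smul, sq]

end ScaleOffDiag

section PosDef

variable {m n : Type*}

theorem IsHermitian.toBlocks₂₁_eq {α : Type*} [InvolutiveStar α] {M : Matrix (m ⊕ n) (m ⊕ n) α}
    (hM : M.IsHermitian) : M.toBlocks₂₁ = M.toBlocks₁₂ᴴ :=
  (isHermitian_fromBlocks_iff.mp ((fromBlocks_toBlocks M).symm ▸ hM)).2.1.symm

theorem PosDef.toBlocks₁₁ {M : Matrix (m ⊕ n) (m ⊕ n) ℝ} (hM : M.PosDef) :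
    M.toBlocks₁₁.PosDef :=
  hM.submatrix Sum.inl_injective

variable [Fintype m] [Fintype n] [DecidableEq m] [DecidableEq n]

theorem PosDef.schur_complement_toBlocks₁₁ {M : Matrix (m ⊕ n) (m ⊕ n) ℝ} (hM : M.PosDef) :
    (M.toBlocks₂₂ - M.toBlocks₂₁ * M.toBlocks₁₁⁻¹ * M.toBlocks₁₂).PosDef := by
  have h₁₁ := hM.toBlocks₁₁
  have := h₁₁.isUnit.invertible
  have hM' : (fromBlocks M.toBlocks₁₁ M.toBlocks₁₂ M.toBlocks₁₂ᴴ M.toBlocks₂₂).PosDef := by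
    rwa [← hM.isHermitian.toBlocks₂₁_eq, fromBlocks_toBlocks]
  rw [hM.isHermitian.toBlocks₂₁_eq]
  refine ((PosDef.fromBlocks₁₁ _ _ h₁₁).mp hM'.posSemidef).posDef_iff_det_ne_zero.mpr ?_
  have hdet := hM'.det_pos
  rw [det_fromBlocks₁₁, invOf_eq_nonsing_inv] at hdet
  exact (pos_of_mul_pos_right hdet h₁₁.det_pos.le).ne'

theorem PosDef.antitoneOn_det_scaleOffDiag {P : Matrix (m ⊕ n) (m ⊕ n) ℝ} (hP : P.PosDef) :
    AntitoneOn (fun s ↦ det (scaleOffDiag s P)) (Set.Icc 0 1) := by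
  have h₁₁ := hP.toBlocks₁₁
  have := h₁₁.isUnit.invertible
  set X := P.toBlocks₂₁ * P.toBlocks₁₁⁻¹ * P.toBlocks₁₂ with hX_def
  have hX : X.PosSemidef := by
    rw [hX_def, hP.isHermitian.toBlocks₂₁_eq]
    exact h₁₁.inv.posSemidef.conjTranspose_mul_mul_same _
  have hQ : ∀ t ∈ Set.Icc (0 : ℝ) 1, (P.toBlocks₂₂ - t ^ 2 • X).PosDef := fun t ⟨ht₀, ht₁⟩ ↦ by
    have : P.toBlocks₂₂ - t ^ 2 • X = (P.toBlocks₂₂ - X) + (1 - t ^ 2) • X := by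
      rw [sub_smul, one_smul]; abel
    rw [this]
    exact hP.schur_complement_toBlocks₁₁.add_posSemidef (hX.smul (by nlinarith))
  intro s ⟨hs, _⟩ t ht hst
  simp only [det_scaleOffDiag, invOf_eq_nonsing_inv, ← hX_def]
  refine mul_le_mul_of_nonneg_left ?_ h₁₁.det_pos.le
  have : P.toBlocks₂₂ - s ^ 2 • X = (P.toBlocks₂₂ - t ^ 2 • X) + (t ^ 2 - s ^ 2) • X := by
    rw [sub_smul]; abel
  rw [this]
  exact (hQ t ht).det_le_det_add (hX.smul (by nlinarith [ht.1]))

theorem exists_posDef_det_one_add_fromBlocks_mul_scaleOffDiag {S : Matrix (m ⊕ n) (m ⊕ n) ℝ}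
    {A₁ : Matrix m m ℝ} {A₂ : Matrix n n ℝ} (hS : S.PosSemidef) (h₁ : A₁.PosSemidef)
    (h₂ : A₂.PosSemidef) :
    ∃ P : Matrix (m ⊕ n) (m ⊕ n) ℝ, P.PosDef ∧
      ∀ s, det (1 + fromBlocks A₁ 0 0 A₂ * scaleOffDiag s S) = det (scaleOffDiag s P) := by
  set B := fromBlocks (CFC.sqrt A₁) 0 0 (CFC.sqrt A₂)
  have hBB : B * B = fromBlocks A₁ 0 0 A₂ := by
    simp [B, fromBlocks_multiply, CFC.sqrt_mul_sqrt_self, h₁.nonneg, h₂.nonneg]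
  have hB : B.IsHermitian :=
    (CFC.sqrt_nonneg A₁).posSemidef.1.fromBlocks (by simp) (CFC.sqrt_nonneg A₂).posSemidef.1
  refine ⟨1 + B * S * B, PosDef.one.add_posSemidef ?_, fun s ↦ ?_⟩
  · simpa only [hB.eq] using hS.conjTranspose_mul_mul_same B
  · rw [← hBB, det_one_add_mul_self_mul, fromBlocks_diagonal_mul_scaleOffDiag_mul,
      scaleOffDiag_add, scaleOffDiag_one]

end PosDef

end Matrix

/-- **Royen's monotonicity lemma**: for a positive-definite `Σ` in block form, with
`Σ^(s) = [[Σ₁, sΣ_o],[sΣ_o^*, Σ₂]]`, the map `s ↦ det(Id + (A₁ ⊕ A₂)Σ^(s))` is monotone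
non-increasing on `[0,1]` for all positive semi-definite `A₁, A₂ ≥ 0`; in particular,
`inf_{A₁,A₂ ≥ 0} det(Id + (A₁ ⊕ A₂)(Σ₁ ⊕ Σ₂)) / det(Id + (A₁ ⊕ A₂)Σ) = 1`. -/
theorem royen_monotonicity (n₁ n₂ : ℕ)
    (S : Matrix (Fin n₁ ⊕ Fin n₂) (Fin n₁ ⊕ Fin n₂) ℝ) (hS : S.PosDef) :
    (∀ (A₁ : Matrix (Fin n₁) (Fin n₁) ℝ) (A₂ : Matrix (Fin n₂) (Fin n₂) ℝ),
      A₁.PosSemidef → A₂.PosSemidef →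
      AntitoneOn (fun s : ℝ =>
          (1 + fromBlocks A₁ 0 0 A₂ *
            fromBlocks S.toBlocks₁₁ (s • S.toBlocks₁₂) (s • S.toBlocks₂₁) S.toBlocks₂₂).det)
        (Set.Icc (0 : ℝ) 1)) ∧
    sInf {r : ℝ | ∃ (A₁ : Matrix (Fin n₁) (Fin n₁) ℝ) (A₂ : Matrix (Fin n₂) (Fin n₂) ℝ),
        A₁.PosSemidef ∧ A₂.PosSemidef ∧
        r = (1 + fromBlocks A₁ 0 0 A₂ * fromBlocks S.toBlocks₁₁ 0 0 S.toBlocks₂₂).det /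
            (1 + fromBlocks A₁ 0 0 A₂ * S).det} = 1 := by
  refine ⟨fun A₁ A₂ h₁ h₂ ↦ ?_, IsLeast.csInf_eq ⟨⟨0, 0, .zero, .zero, by simp⟩, ?_⟩⟩
  · obtain ⟨P, hP, hdet⟩ :=
      exists_posDef_det_one_add_fromBlocks_mul_scaleOffDiag hS.posSemidef h₁ h₂
    change AntitoneOn (fun s ↦ det (1 + fromBlocks A₁ 0 0 A₂ * scaleOffDiag s S)) _
    simpa only [hdet] using hP.antitoneOn_det_scaleOffDiag
  · rintro r ⟨A₁, A₂, h₁, h₂, rfl⟩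
    obtain ⟨P, hP, hdet⟩ :=
      exists_posDef_det_one_add_fromBlocks_mul_scaleOffDiag hS.posSemidef h₁ h₂
    have hnum := hdet 0
    have hden := hdet 1
    rw [scaleOffDiag_zero_left] at hnum
    rw [scaleOffDiag_one_left] at hden
    rw [hnum, hden, one_le_div (by simpa using hP.det_pos)]
    exact hP.antitoneOn_det_scaleOffDiag ⟨le_rfl, zero_le_one⟩ ⟨zero_le_one, le_rfl⟩ zero_le_one
end

section
/- Let X be a centered Gaussian random vector in ℝ^N with positive-definite covariance Σ, let n_1 + n_2 = N, let P_i : ℝ^N → ℝ^{n_i} be given by P_i x = x_i for x = (x_1,x_2) ∈ ℝ^{n_1} ⊕ ℝ^{n_2}, and let Σ_i denote the covariance of P_i X (the corresponding diagonal block of Σ). Then for all positive semi-definite symmetric matrices A_1, A_2 ≥ 0: E[g_{A_1}(P_1 X) g_{A_2}(P_2 X)] / (E[g_{A_1}(P_1 X)] · E[g_{A_2}(P_2 X)]) = (det(Id_{n_1} + A_1Σ_1) · det(Id_{n_2} + A_2Σ_2) / det(Id_N + (A_1 ⊕ A_2)Σ))^{1/2}. -/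
open MeasureTheory Matrix

/-- The density (up to normalization) of a centered Gaussian vector with positive-definite
covariance `S`, namely `x ↦ exp(-(1/2)⟨S⁻¹x,x⟩)`. -/
noncomputable def gaussDensityInv {ι : Type*} [Fintype ι] [DecidableEq ι]
    (S : Matrix ι ι ℝ) (x : ι → ℝ) : ℝ :=
  Real.exp (-(1/2 : ℝ) * (x ⬝ᵥ (S⁻¹).mulVec x))

lemma Matrix.det_add_inv_eq_det_one_add_mul {ι R : Type*} [Fintype ι] [DecidableEq ι] [CommRing R]
    (A : Matrix ι ι R) {S : Matrix ι ι R} (hS : IsUnit S.det) :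
    (A + S⁻¹).det = (1 + A * S).det * S⁻¹.det := by
  rw [← det_mul, add_mul, one_mul, mul_assoc, mul_nonsing_inv _ hS, mul_one, add_comm]

section Gaussian

variable {ι : Type*} [Fintype ι] [DecidableEq ι]

omit [DecidableEq ι] in
lemma gaussFn_zero (x : ι → ℝ) : gaussFn 0 x = 1 := by
  simp [gaussFn]

omit [DecidableEq ι] in
lemma gaussFn_add (A B : Matrix ι ι ℝ) (x : ι → ℝ) :
    gaussFn (A + B) x = gaussFn A x * gaussFn B x := by
  simp only [gaussFn, add_mulVec, dotProduct_add, ← Real.exp_add]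
  ring_nf

lemma gaussDensityInv_eq_gaussFn_inv (S : Matrix ι ι ℝ) : gaussDensityInv S = gaussFn S⁻¹ := rfl

lemma gaussFn_mul_gaussDensityInv (A S : Matrix ι ι ℝ) (x : ι → ℝ) :
    gaussFn A x * gaussDensityInv S x = gaussFn (A + S⁻¹) x := by
  rw [gaussDensityInv_eq_gaussFn_inv, gaussFn_add]

lemma gaussFn_conjTranspose_mul_self (B : Matrix ι ι ℝ) (x : ι → ℝ) :
    gaussFn (Bᴴ * B) x = gaussFn 1 (B *ᵥ x) := by
  rw [gaussFn, gaussFn, one_mulVec, ← mulVec_mulVec, dotProduct_mulVec,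
    conjTranspose_eq_transpose_of_trivial, vecMul_transpose]

lemma integral_gaussFn_one :
    ∫ x : ι → ℝ, gaussFn 1 x = √((2 * Real.pi) ^ Fintype.card ι) := by
  have h : ∀ x : ι → ℝ, gaussFn 1 x = ∏ i, Real.exp (-(1/2 : ℝ) * x i ^ 2) := by
    intro x
    simp only [gaussFn, one_mulVec, dotProduct, ← sq, Finset.mul_sum, Real.exp_sum]
  simp_rw [h]
  rw [volume_pi, integral_fintype_prod_eq_pow (fun t : ℝ => Real.exp (-(1/2 : ℝ) * t ^ 2)),
    integral_gaussian, ← Real.sqrt_sq (by positivity : 0 ≤ √(Real.pi / (1 / 2)) ^ Fintype.card ι),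
    ← pow_mul, mul_comm, pow_mul, Real.sq_sqrt (by positivity)]
  congr 2
  field_simp

lemma integral_comp_mulVec {B : Matrix ι ι ℝ} (hB : B.det ≠ 0) (f : (ι → ℝ) → ℝ) :
    ∫ x, f (B *ᵥ x) = |B.det⁻¹| * ∫ y, f y := by
  have hemb : MeasurableEmbedding (toLin' B) :=
    (LinearMap.isClosedEmbedding_of_injective (LinearMap.ker_eq_bot.mpr
      (mulVec_injective_iff_isUnit.mpr ((isUnit_iff_isUnit_det B).mpr hB.isUnit))))
      |>.measurableEmbedding
  calc ∫ x, f (B *ᵥ x) = ∫ y, f y ∂(Measure.map (toLin' B) volume) :=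
        (hemb.integral_map f).symm
    _ = |B.det⁻¹| * ∫ y, f y := by
      rw [Real.map_matrix_volume_pi_eq_smul_volume_pi hB, integral_smul_measure,
        ENNReal.toReal_ofReal (abs_nonneg _), smul_eq_mul]

theorem integral_gaussFn {M : Matrix ι ι ℝ} (hM : M.PosDef) :
    ∫ x : ι → ℝ, gaussFn M x = √((2 * Real.pi) ^ Fintype.card ι / M.det) := by
  obtain ⟨B, rfl⟩ : ∃ B : Matrix ι ι ℝ, M = star B * B := by
    open scoped MatrixOrder in
    exact CStarAlgebra.nonneg_iff_eq_star_mul_self.mp hM.posSemidef.nonneg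
  have hdet : (star B * B).det = B.det ^ 2 := by
    rw [det_mul, star_eq_conjTranspose, det_conjTranspose, star_trivial, sq]
  have hB : B.det ≠ 0 := fun h => hM.det_pos.ne' (by rw [hdet, h]; ring)
  simp_rw [star_eq_conjTranspose, gaussFn_conjTranspose_mul_self]
  rw [integral_comp_mulVec hB (gaussFn 1), integral_gaussFn_one, ← star_eq_conjTranspose, hdet,
    Real.sqrt_div' _ (sq_nonneg _), Real.sqrt_sq_eq_abs, abs_inv]
  ring

lemma det_one_add_mul_pos {S A : Matrix ι ι ℝ} (hS : S.PosDef) (hA : A.PosSemidef) :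
    0 < (1 + A * S).det := by
  have h := (PosDef.posSemidef_add hA hS.inv).det_pos
  rw [det_add_inv_eq_det_one_add_mul A hS.det_pos.ne'.isUnit] at h
  exact pos_of_mul_pos_left h hS.inv.det_pos.le

lemma integral_gaussFn_mul_gaussDensityInv_div {S A : Matrix ι ι ℝ}
    (hS : S.PosDef) (hA : A.PosSemidef) :
    (∫ x, gaussFn A x * gaussDensityInv S x) / ∫ x, gaussDensityInv S x =
      (√(1 + A * S).det)⁻¹ := by
  have hc : 0 < (2 * Real.pi) ^ Fintype.card ι := by positivity
  have ht := hS.inv.det_pos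
  simp_rw [gaussFn_mul_gaussDensityInv]
  rw [integral_gaussFn (PosDef.posSemidef_add hA hS.inv),
    gaussDensityInv_eq_gaussFn_inv, integral_gaussFn hS.inv,
    det_add_inv_eq_det_one_add_mul A hS.det_pos.ne'.isUnit, ← Real.sqrt_div' _ (by positivity),
    ← Real.sqrt_inv]
  congr 1
  field_simp

end Gaussian

section Blocks

variable {m n R : Type*} [Fintype m] [Fintype n]

lemma dotProduct_fromBlocks_zero_mulVec [NonUnitalNonAssocSemiring R] (A : Matrix m m R)
    (D : Matrix n n R) (x y : m ⊕ n → R) :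
    x ⬝ᵥ fromBlocks A 0 0 D *ᵥ y =
      x ∘ Sum.inl ⬝ᵥ A *ᵥ (y ∘ Sum.inl) + x ∘ Sum.inr ⬝ᵥ D *ᵥ (y ∘ Sum.inr) := by
  simp [dotProduct_block, fromBlocks_mulVec]

lemma gaussFn_fromBlocks (A : Matrix m m ℝ) (D : Matrix n n ℝ) (x : m ⊕ n → ℝ) :
    gaussFn (fromBlocks A 0 0 D) x = gaussFn A (x ∘ Sum.inl) * gaussFn D (x ∘ Sum.inr) := by
  rw [gaussFn, gaussFn, gaussFn, dotProduct_fromBlocks_zero_mulVec, mul_add, Real.exp_add]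

lemma Matrix.PosSemidef.fromBlocks_zero [CommRing R] [PartialOrder R] [StarRing R]
    [AddLeftMono R] {A : Matrix m m R} {D : Matrix n n R} (hA : A.PosSemidef) (hD : D.PosSemidef) :
    (fromBlocks A 0 0 D).PosSemidef := by
  refine .of_dotProduct_mulVec_nonneg (hA.isHermitian.fromBlocks (by simp) hD.isHermitian)
    fun x => ?_
  rw [dotProduct_fromBlocks_zero_mulVec]
  exact add_nonneg (hA.dotProduct_mulVec_nonneg _) (hD.dotProduct_mulVec_nonneg _)

variable [DecidableEq m] [DecidableEq n] [CommRing R]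

lemma det_one_add_fromBlocks₁₁_mul (A : Matrix m m R) (S : Matrix (m ⊕ n) (m ⊕ n) R) :
    (1 + fromBlocks A 0 0 0 * S).det = (1 + A * S.toBlocks₁₁).det := by
  rw [← fromBlocks_toBlocks S, fromBlocks_multiply]
  simp only [Matrix.zero_mul, add_zero, toBlocks_fromBlocks₁₁]
  rw [← fromBlocks_one, fromBlocks_add]
  simp only [add_zero, zero_add]
  rw [det_fromBlocks_zero₂₁, det_one, mul_one]

lemma det_one_add_fromBlocks₂₂_mul (D : Matrix n n R) (S : Matrix (m ⊕ n) (m ⊕ n) R) :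
    (1 + fromBlocks 0 0 0 D * S).det = (1 + D * S.toBlocks₂₂).det := by
  rw [← fromBlocks_toBlocks S, fromBlocks_multiply]
  simp only [Matrix.zero_mul, zero_add, toBlocks_fromBlocks₂₂]
  rw [← fromBlocks_one, fromBlocks_add]
  simp only [add_zero, zero_add]
  rw [det_fromBlocks_zero₁₂, det_one, one_mul]

end Blocks

/-- If `X` is a centered Gaussian random vector in `ℝ^N = ℝ^{n₁} ⊕ ℝ^{n₂}` with
positive-definite covariance `S` (with diagonal blocks `Σ₁, Σ₂`), then for all positive
semi-definite `A₁, A₂ ≥ 0`: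
`E[g_{A₁}(P₁X)g_{A₂}(P₂X)] / (E[g_{A₁}(P₁X)] E[g_{A₂}(P₂X)])
  = (det(Id + A₁Σ₁) det(Id + A₂Σ₂) / det(Id + (A₁ ⊕ A₂)Σ))^{1/2}`.
Expectations are expressed as normalized integrals of the Gaussian density. -/
theorem gaussian_ratio_formula (n₁ n₂ : ℕ)
    (S : Matrix (Fin n₁ ⊕ Fin n₂) (Fin n₁ ⊕ Fin n₂) ℝ) (hS : S.PosDef)
    (A₁ : Matrix (Fin n₁) (Fin n₁) ℝ) (A₂ : Matrix (Fin n₂) (Fin n₂) ℝ)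
    (hA₁ : A₁.PosSemidef) (hA₂ : A₂.PosSemidef) :
    ((∫ x : Fin n₁ ⊕ Fin n₂ → ℝ,
        gaussFn A₁ (x ∘ Sum.inl) * gaussFn A₂ (x ∘ Sum.inr) * gaussDensityInv S x) /
      (∫ x : Fin n₁ ⊕ Fin n₂ → ℝ, gaussDensityInv S x)) /
    (((∫ x : Fin n₁ ⊕ Fin n₂ → ℝ, gaussFn A₁ (x ∘ Sum.inl) * gaussDensityInv S x) /
        (∫ x : Fin n₁ ⊕ Fin n₂ → ℝ, gaussDensityInv S x)) *
      ((∫ x : Fin n₁ ⊕ Fin n₂ → ℝ, gaussFn A₂ (x ∘ Sum.inr) * gaussDensityInv S x) /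
        (∫ x : Fin n₁ ⊕ Fin n₂ → ℝ, gaussDensityInv S x)))
    = Real.sqrt ((1 + A₁ * S.toBlocks₁₁).det * (1 + A₂ * S.toBlocks₂₂).det /
        (1 + fromBlocks A₁ 0 0 A₂ * S).det) := by
  have hF := hA₁.fromBlocks_zero hA₂
  have hF₁ := hA₁.fromBlocks_zero (.zero (n := Fin n₂))
  have hF₂ := (PosSemidef.zero (n := Fin n₁)).fromBlocks_zero hA₂
  have ha := det_one_add_mul_pos hS hF₁
  rw [det_one_add_fromBlocks₁₁_mul] at ha
  have e₁ (x : Fin n₁ ⊕ Fin n₂ → ℝ) :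
      gaussFn A₁ (x ∘ Sum.inl) = gaussFn (fromBlocks A₁ 0 0 0) x := by
    rw [gaussFn_fromBlocks, gaussFn_zero, mul_one]
  have e₂ (x : Fin n₁ ⊕ Fin n₂ → ℝ) :
      gaussFn A₂ (x ∘ Sum.inr) = gaussFn (fromBlocks 0 0 0 A₂) x := by
    rw [gaussFn_fromBlocks, gaussFn_zero, one_mul]
  simp only [← gaussFn_fromBlocks A₁ A₂]
  simp only [e₁, e₂]
  rw [integral_gaussFn_mul_gaussDensityInv_div hS hF,
    integral_gaussFn_mul_gaussDensityInv_div hS hF₁,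
    integral_gaussFn_mul_gaussDensityInv_div hS hF₂, det_one_add_fromBlocks₁₁_mul,
    det_one_add_fromBlocks₂₂_mul, Real.sqrt_div' _ (det_one_add_mul_pos hS hF).le,
    Real.sqrt_mul ha.le]
  field_simp
end
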